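/- Let L > 0 and R = Σ_{j=1}^N r_j, and assume R < 1. Then for every complex number s with Re s > D, the series Σ_{l=0}^∞ Σ_{(a_1,...,a_l) ∈ {1,...,N}^l} (L(1−R)·r_{a_1} r_{a_2} ··· r_{a_l})^s over all finite words (including the empty word, which contributes (L(1−R))^s) converges absolutely and equals (L(1−R))^s / (1 − Σ_{j=1}^N r_j^s). In other words, the geometric zeta function of the self-similar fractal string with scaling ratios r_1, ..., r_N and total length L equals (L(1−R))^s · ζ_w(s) for Re s > D, where ζ_w(s) = 1/(1 − Σ_{j=1}^N r_j^s) is the dynamical zeta function of the corresponding self-similar flow. -/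

import Mathlib

/-!
Writing `r_j^s = exp (-w_j s)`, the term of a word `(a_1, …, a_l)` is `(L(1-R))^s` times
`∏ i, r_{a_i}^s`, and the words of length `l` contribute `(L(1-R))^s (∑_j r_j^s)^l`. Since
`t ↦ ∑_j r_j^t` is strictly decreasing and equals `1` at `t = D`, we get
`∑_j |r_j^s| = ∑_j r_j^{Re s} < 1` for `Re s > D`, so the series over words is a geometric series
in `∑_j r_j^s`, absolutely convergent.
-/

open Finset

section Words

variable {ι 𝕜 : Type*} [Fintype ι] [NormedField 𝕜]

theorem summable_norm_prod_words {f : ι → 𝕜} (hf : ∑ j, ‖f j‖ < 1) :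
    Summable fun y : Σ l : ℕ, Fin l → ι => ‖∏ i, f (y.2 i)‖ := by
  refine (summable_sigma_of_nonneg fun _ => norm_nonneg _).2 ⟨fun _ => .of_finite, ?_⟩
  refine (summable_geometric_of_lt_one (sum_nonneg fun _ _ => norm_nonneg _) hf).congr
    fun l => ?_
  simp only [tsum_fintype, norm_prod, Fintype.sum_pow]

theorem hasSum_prod_words [CompleteSpace 𝕜] {f : ι → 𝕜} (hf : ∑ j, ‖f j‖ < 1) :
    HasSum (fun y : Σ l : ℕ, Fin l → ι => ∏ i, f (y.2 i)) (1 - ∑ j, f j)⁻¹ :=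
  (hasSum_geometric_of_norm_lt_one ((norm_sum_le _ _).trans_lt hf)).sigma_of_hasSum
    (fun l => by simpa only [Fintype.sum_pow] using hasSum_fintype _)
    (summable_norm_prod_words hf).of_norm

end Words

theorem Complex.exp_mul_log_mul_prod_exp {κ : Type*} [Fintype κ] (s : ℂ) {c : ℝ} (hc : c ≠ 0)
    (x : κ → ℝ) :
    exp (s * Real.log (c * ∏ i, Real.exp (x i))) = exp (s * Real.log c) * ∏ i, exp (x i * s) := by
  rw [Real.log_mul hc (prod_ne_zero_iff.2 fun i _ => (Real.exp_pos _).ne'),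
    Real.log_prod fun i _ => (Real.exp_pos _).ne']
  simp only [Real.log_exp, ofReal_add, ofReal_sum, mul_comm s, add_mul, sum_mul, exp_add, exp_sum]

theorem Complex.norm_exp_ofReal_mul (x : ℝ) (s : ℂ) : ‖exp (x * s)‖ = Real.exp (x * s.re) := by
  rw [norm_exp, re_ofReal_mul]

theorem strictAnti_sum_exp_neg_mul {κ : Type*} [Fintype κ] [Nonempty κ] {w : κ → ℝ}
    (hw : ∀ j, 0 < w j) : StrictAnti fun t : ℝ => ∑ j, Real.exp (-(w j) * t) :=
  fun _ _ htu => sum_lt_sum_of_nonempty univ_nonempty fun j _ =>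
    Real.exp_lt_exp.2 (by nlinarith [hw j])

theorem geometric_zeta_self_similar_string_general (N : ℕ) (w : Fin N → ℝ)
    (hw : ∀ j, 0 < w j)
    (D : ℝ) (hD : ∑ j, Real.exp (-(w j) * D) = 1)
    (L : ℝ) (hL : 0 < L) (R : ℝ) (hR1 : R < 1)
    (s : ℂ) (hs : D < s.re) :
    Summable (fun y : Σ l : ℕ, Fin l → Fin N =>
        ‖Complex.exp (s * (Real.log (L * (1 - R) * ∏ i, Real.exp (-(w (y.2 i)))) : ℂ))‖) ∧
      ∑' y : Σ l : ℕ, Fin l → Fin N,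
          Complex.exp (s * (Real.log (L * (1 - R) * ∏ i, Real.exp (-(w (y.2 i)))) : ℂ))
        = Complex.exp (s * (Real.log (L * (1 - R)) : ℂ))
            / (1 - ∑ j, Complex.exp (-(w j : ℂ) * s)) := by
  have : Nonempty (Fin N) :=
    univ_nonempty_iff.1 (nonempty_of_sum_ne_zero (hD ▸ one_ne_zero))
  have hf : ∑ j, ‖Complex.exp (-(w j : ℂ) * s)‖ < 1 := by
    simpa only [← Complex.ofReal_neg, Complex.norm_exp_ofReal_mul, hD]
      using strictAnti_sum_exp_neg_mul hw hs
  have hterm (y : Σ l : ℕ, Fin l → Fin N) :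
      Complex.exp (s * (Real.log (L * (1 - R) * ∏ i, Real.exp (-(w (y.2 i)))) : ℂ)) =
        Complex.exp (s * (Real.log (L * (1 - R)) : ℂ)) *
          ∏ i, Complex.exp (-(w (y.2 i) : ℂ) * s) := by
    simpa only [Complex.ofReal_neg] using
      Complex.exp_mul_log_mul_prod_exp s (mul_pos hL (sub_pos.2 hR1)).ne' fun i => -(w (y.2 i))
  simp only [hterm, norm_mul, div_eq_mul_inv]
  exact ⟨(summable_norm_prod_words hf).mul_left _, ((hasSum_prod_words hf).mul_left _).tsum_eq⟩

/-- The geometric zeta function of a self-similar string: for `Re s > D`, the series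
`∑ (L(1-R) r_{a_1} ⋯ r_{a_l})^s` over all finite words (including the empty word)
converges absolutely and equals `(L(1-R))^s / (1 - ∑_j r_j^s)`, i.e. it equals
`(L(1-R))^s ζ_w(s)`. Here `t^s = e^{s log t}` for `t > 0`, and `r_j = e^{-w_j}`. -/
theorem geometric_zeta_self_similar_string (N : ℕ) (hN : 2 ≤ N) (w : Fin N → ℝ)
    (hw : ∀ j, 0 < w j) (hmono : Monotone w)
    (D : ℝ) (hD : ∑ j, Real.exp (-(w j) * D) = 1)
    (L : ℝ) (hL : 0 < L) (R : ℝ) (hR : R = ∑ j, Real.exp (-(w j))) (hR1 : R < 1)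
    (s : ℂ) (hs : D < s.re) :
    Summable (fun y : Σ l : ℕ, Fin l → Fin N =>
        ‖Complex.exp (s * (Real.log (L * (1 - R) * ∏ i, Real.exp (-(w (y.2 i)))) : ℂ))‖) ∧
      ∑' y : Σ l : ℕ, Fin l → Fin N,
          Complex.exp (s * (Real.log (L * (1 - R) * ∏ i, Real.exp (-(w (y.2 i)))) : ℂ))
        = Complex.exp (s * (Real.log (L * (1 - R)) : ℂ))
            / (1 - ∑ j, Complex.exp (-(w j : ℂ) * s)) :=
  geometric_zeta_self_similar_string_general N w hw D hD L hL R hR1 s hs
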